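/- arXiv:2305.03333 — 4 statements merged into one kernel-verified Lean document; each statement's English description precedes it below -/
import Mathlib

section
/- Let 0 < s < ∞ and let μ be a finite positive Borel measure on [0,1). If μ is an s-Carleson measure, i.e. there is M > 0 with μ([a,1)) ≤ M(1-a)^s for all 0 ≤ a < 1, then the moments satisfy μ_n = O(n^{-s}), i.e. there is C > 0 with μ_n ≤ C n^{-s} for all n ≥ 1. -/
/-! By the layer-cake formula, `μ_n = ∫₀¹ μ{x ∈ [0,1) : t < xⁿ} dt`, and that level set lies in
`[t^{1/n}, 1)`. The Carleson condition bounds its mass by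
`M (1 - t^{1/n})^s ≤ M (-log t / n)^s ≤ M (2s/n)^s t^{-1/2}`, using `1 - eˣ ≤ -x` and
`-log t ≤ 2s t^{-1/(2s)}`; the factor `t^{-1/2}` is integrable on `(0,1)`, so
`μ_n ≤ 2M (2s/n)^s`. -/

open MeasureTheory Set Real

lemma Real.one_sub_rpow_le_neg_mul_log {t : ℝ} (ht : 0 < t) (p : ℝ) : 1 - t ^ p ≤ -(p * log t) := by
  rw [rpow_def_of_pos ht, mul_comm]
  linarith [add_one_le_exp (p * log t)]

lemma Real.neg_log_le_rpow_neg_div {t ε : ℝ} (ht : 0 < t) (hε : 0 < ε) : -log t ≤ t ^ (-ε) / ε := by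
  simpa [log_inv, inv_rpow ht.le, ← rpow_neg ht.le] using log_le_rpow_div (inv_nonneg.2 ht.le) hε

lemma one_sub_rpow_inv_rpow_le {t s n : ℝ} (ht₀ : 0 < t) (ht₁ : t ≤ 1) (hs : 0 < s) (hn : 0 < n) :
    (1 - t ^ n⁻¹) ^ s ≤ (2 * s / n) ^ s * t ^ (-(1 / 2 : ℝ)) := by
  have h₀ : 0 ≤ 1 - t ^ n⁻¹ := sub_nonneg.2 (rpow_le_one ht₀.le ht₁ (inv_nonneg.2 hn.le))
  have h₁ : 1 - t ^ n⁻¹ ≤ 2 * s / n * t ^ (-(2 * s)⁻¹) := by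
    calc 1 - t ^ n⁻¹ ≤ -(n⁻¹ * log t) := one_sub_rpow_le_neg_mul_log ht₀ _
      _ = (-log t) / n := by ring
      _ ≤ t ^ (-(2 * s)⁻¹) / (2 * s)⁻¹ / n := by
        gcongr; exact neg_log_le_rpow_neg_div ht₀ (by positivity)
      _ = 2 * s / n * t ^ (-(2 * s)⁻¹) := by field_simp
  calc (1 - t ^ n⁻¹) ^ s ≤ (2 * s / n * t ^ (-(2 * s)⁻¹)) ^ s := by gcongr
    _ = (2 * s / n) ^ s * t ^ (-(1 / 2 : ℝ)) := by
      rw [mul_rpow (by positivity) (by positivity), ← rpow_mul ht₀.le]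
      congr 2; field_simp

lemma integral_rpow_neg_one_half : ∫ t in (0 : ℝ)..1, t ^ (-(1 / 2 : ℝ)) = 2 := by
  rw [integral_rpow (Or.inl (by norm_num))]
  norm_num

lemma integral_le_of_measureReal_lt_le {α : Type*} [MeasurableSpace α] {ν : Measure α}
    {f : α → ℝ} {g : ℝ → ℝ} (hf₀ : 0 ≤ᵐ[ν] f) (hf : Integrable f ν) (hg : IntegrableOn g (Ioi 0))
    (hfg : ∀ t > 0, ν.real {x | t < f x} ≤ g t) :
    ∫ x, f x ∂ν ≤ ∫ t in Ioi 0, g t := by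
  rw [hf.integral_eq_integral_meas_lt hf₀]
  exact integral_mono_of_nonneg (.of_forall fun _ ↦ measureReal_nonneg) hg
    (ae_restrict_of_forall_mem measurableSet_Ioi hfg)

section Carleson

variable {μ : Measure ℝ} [IsFiniteMeasure μ] {s M : ℝ}

lemma measureReal_lt_pow_le_of_carleson
    (hM : ∀ a : ℝ, 0 ≤ a → a < 1 → (μ (Ico a 1)).toReal ≤ M * (1 - a) ^ s)
    {t : ℝ} (ht₀ : 0 < t) (ht₁ : t < 1) {n : ℕ} (hn : n ≠ 0) :
    (μ.restrict (Ico 0 1)).real {x | t < x ^ n} ≤ M * (1 - t ^ (n : ℝ)⁻¹) ^ s := by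
  have hn' : (0 : ℝ) < n := by positivity
  have hsub : {x : ℝ | t < x ^ n} ∩ Ico 0 1 ⊆ Ico (t ^ (n : ℝ)⁻¹) 1 := by
    rintro x ⟨hx, hx₀, hx₁⟩
    exact ⟨((rpow_inv_lt_iff_of_pos ht₀.le hx₀ hn').2 (by rwa [rpow_natCast])).le, hx₁⟩
  rw [measureReal_restrict_apply' measurableSet_Ico]
  exact (measureReal_mono hsub).trans
    (hM _ (rpow_nonneg ht₀.le _) (rpow_lt_one ht₀.le ht₁ (inv_pos.2 hn')))

lemma integral_pow_le_of_carleson (hs : 0 < s) (hM₀ : 0 ≤ M)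
    (hM : ∀ a : ℝ, 0 ≤ a → a < 1 → (μ (Ico a 1)).toReal ≤ M * (1 - a) ^ s)
    {n : ℕ} (hn : n ≠ 0) :
    ∫ t in Ico (0 : ℝ) 1, t ^ n ∂μ ≤ 2 * M * (2 * s / n) ^ s := by
  set K := M * (2 * s / n) ^ s
  have hK : 0 ≤ K := by positivity
  have hg : IntegrableOn (fun t : ℝ ↦ K * t ^ (-(1 / 2 : ℝ))) (Ioc 0 1) :=
    ((intervalIntegral.intervalIntegrable_rpow' (by norm_num)).1).const_mul K
  have hlevel : ∀ t > 0, (μ.restrict (Ico 0 1)).real {x | t < x ^ n} ≤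
      (Ioc 0 1).indicator (fun t : ℝ ↦ K * t ^ (-(1 / 2 : ℝ))) t := by
    intro t ht₀
    rcases lt_or_ge t 1 with ht₁ | ht₁
    · rw [indicator_of_mem (show t ∈ Ioc 0 1 from ⟨ht₀, ht₁.le⟩)]
      calc _ ≤ M * (1 - t ^ (n : ℝ)⁻¹) ^ s := measureReal_lt_pow_le_of_carleson hM ht₀ ht₁ hn
        _ ≤ M * ((2 * s / n) ^ s * t ^ (-(1 / 2 : ℝ))) := by
          gcongr; exact one_sub_rpow_inv_rpow_le ht₀ ht₁.le hs (by positivity)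
        _ = K * t ^ (-(1 / 2 : ℝ)) := by ring
    · have hempty : {x : ℝ | t < x ^ n} ∩ Ico 0 1 = ∅ := by
        refine eq_empty_of_forall_notMem ?_
        rintro x ⟨hx, hx₀, hx₁⟩
        exact (pow_le_one₀ hx₀ hx₁.le).not_gt (ht₁.trans_lt hx)
      rw [measureReal_restrict_apply' measurableSet_Ico, hempty, measureReal_empty]
      exact indicator_nonneg (fun t ht ↦ by have := ht.1; positivity) t
  have hint : Integrable (fun t : ℝ ↦ t ^ n) (μ.restrict (Ico 0 1)) := by
    refine (integrable_const (1 : ℝ)).mono' (by fun_prop) ?_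
    refine ae_restrict_of_forall_mem measurableSet_Ico fun t ht ↦ ?_
    rw [norm_pow, Real.norm_of_nonneg ht.1]
    exact pow_le_one₀ ht.1 ht.2.le
  calc ∫ t in Ico (0 : ℝ) 1, t ^ n ∂μ
      ≤ ∫ t in Ioi 0, (Ioc 0 1).indicator (fun t : ℝ ↦ K * t ^ (-(1 / 2 : ℝ))) t :=
        integral_le_of_measureReal_lt_le
          (ae_restrict_of_forall_mem measurableSet_Ico fun t ht ↦ pow_nonneg ht.1 n) hint
          ((integrableOn_indicator_iff measurableSet_Ioc).2 (hg.mono_set inter_subset_left)) hlevel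
    _ = K * ∫ t in (0 : ℝ)..1, t ^ (-(1 / 2 : ℝ)) := by
      rw [integral_indicator measurableSet_Ioc, Measure.restrict_restrict measurableSet_Ioc,
        inter_eq_self_of_subset_left Ioc_subset_Ioi_self, integral_const_mul,
        intervalIntegral.integral_of_le zero_le_one]
    _ = 2 * M * (2 * s / n) ^ s := by rw [integral_rpow_neg_one_half]; ring

end Carleson

/-- If `μ` is an `s`-Carleson measure on `[0,1)`, then its moments satisfy `μ_n = O(n^{-s})`. -/
theorem carleson_implies_moment_decay (s : ℝ) (hs : 0 < s)
    (μ : Measure ℝ) [IsFiniteMeasure μ]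
    (hCar : ∃ M : ℝ, 0 < M ∧ ∀ a : ℝ, 0 ≤ a → a < 1 →
      (μ (Set.Ico a 1)).toReal ≤ M * (1 - a) ^ s) :
    ∃ C : ℝ, 0 < C ∧ ∀ n : ℕ, 1 ≤ n →
      (∫ t in Set.Ico (0:ℝ) 1, t ^ n ∂μ) ≤ C * (n : ℝ) ^ (-s) := by
  obtain ⟨M, hM₀, hM⟩ := hCar
  refine ⟨2 * M * (2 * s) ^ s, by positivity, fun n hn ↦ ?_⟩
  calc ∫ t in Ico (0 : ℝ) 1, t ^ n ∂μ ≤ 2 * M * (2 * s / n) ^ s :=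
        integral_pow_le_of_carleson hs hM₀.le hM (by omega)
    _ = 2 * M * (2 * s) ^ s * (n : ℝ) ^ (-s) := by
      rw [div_rpow (by positivity) (Nat.cast_nonneg n), rpow_neg (Nat.cast_nonneg n)]
      ring
end

section
/- Let 0 < s < ∞ and let μ be a finite positive Borel measure on [0,1). If the moments satisfy μ_n ≤ C n^{-s} for all n ≥ 1, then μ is an s-Carleson measure: μ([a,1)) ≲ (1-a)^s for all 0 ≤ a < 1. -/
/-!
Markov's inequality for `tⁿ` gives `aⁿ μ([a,1)) ≤ μₙ ≤ C n^{-s}`. Taking `n = ⌈1/(1-a)⌉` makes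
`n^{-s} ≤ (1-a)^s` while `aⁿ` stays above `e⁻⁴` as long as `a ≥ 1/2`; for `a < 1/2` the
bound is just the finiteness of `μ`.
-/

open MeasureTheory Set Real

def IsCarlesonMeasure (s : ℝ) (μ : Measure ℝ) : Prop :=
  ∃ M : ℝ, 0 < M ∧ ∀ a : ℝ, 0 ≤ a → a < 1 → (μ (Ico a 1)).toReal ≤ M * (1 - a) ^ s

lemma isCarlesonMeasure_of_le_near_one (μ : Measure ℝ) [IsFiniteMeasure μ] {s b M : ℝ}
    (hs : 0 ≤ s) (hb : b < 1)
    (hM : ∀ a, b ≤ a → a < 1 → (μ (Ico a 1)).toReal ≤ M * (1 - a) ^ s) :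
    IsCarlesonMeasure s μ := by
  have hb' : 0 < 1 - b := by linarith
  set K := (μ univ).toReal / (1 - b) ^ s
  refine ⟨max M 0 + K + 1, by positivity, fun a _ ha => ?_⟩
  have hM' : M ≤ max M 0 + K + 1 := by
    have : 0 ≤ K := by positivity
    linarith [le_max_left M 0]
  rcases le_or_gt b a with hba | hab
  · calc (μ (Ico a 1)).toReal ≤ M * (1 - a) ^ s := hM a hba ha
      _ ≤ (max M 0 + K + 1) * (1 - a) ^ s := by gcongr
  · calc (μ (Ico a 1)).toReal ≤ (μ univ).toReal := measureReal_mono (subset_univ _)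
      _ = K * (1 - b) ^ s := (div_mul_cancel₀ _ (rpow_pos_of_pos hb' s).ne').symm
      _ ≤ K * (1 - a) ^ s := by gcongr
      _ ≤ (max M 0 + K + 1) * (1 - a) ^ s := by
        gcongr
        linarith [le_max_right M 0]

lemma pow_mul_measure_Ico_le_integral_pow (μ : Measure ℝ) [IsFiniteMeasure μ] {a b : ℝ}
    (ha : 0 ≤ a) (n : ℕ) :
    a ^ n * (μ (Ico a b)).toReal ≤ ∫ t in Ico 0 b, t ^ n ∂μ := by
  have hint : IntegrableOn (fun t : ℝ => t ^ n) (Ico 0 b) μ :=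
    (continuous_pow n).integrableOn_Icc.mono_set Ico_subset_Icc_self
  calc a ^ n * (μ (Ico a b)).toReal ≤ ∫ t in Ico a b, t ^ n ∂μ :=
        setIntegral_ge_of_const_le_real measurableSet_Ico (measure_ne_top μ _)
          (fun t ht => pow_le_pow_left₀ ha ht.1 n)
          (hint.mono_set (Ico_subset_Ico ha le_rfl))
    _ ≤ ∫ t in Ico 0 b, t ^ n ∂μ :=
        setIntegral_mono_set hint
          (ae_restrict_of_forall_mem measurableSet_Ico fun t ht => pow_nonneg ht.1 n)
          (Ico_subset_Ico ha le_rfl).eventuallyLE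

lemma exp_neg_two_mul_le_pow {a : ℝ} (ha : 1 / 2 ≤ a) (ha' : a ≤ 1) (n : ℕ) :
    exp (-(2 * (n * (1 - a)))) ≤ a ^ n := by
  have hapos : 0 < a := by linarith
  -- `log a ≥ 1 - 1/a = -(1 - a)/a ≥ -2(1 - a)`
  have hlog : -(2 * (1 - a)) ≤ log a := by
    refine le_trans ?_ (one_sub_inv_le_log_of_pos hapos)
    have hinv : a⁻¹ ≤ 2 := by rw [inv_le_comm₀ hapos two_pos]; linarith
    nlinarith [mul_inv_cancel₀ hapos.ne', mul_nonneg (sub_nonneg.2 ha') (sub_nonneg.2 hinv)]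
  calc exp (-(2 * (n * (1 - a)))) = exp (-(2 * (1 - a))) ^ n := by
        rw [← exp_nat_mul]; ring_nf
    _ ≤ exp (log a) ^ n := by gcongr
    _ = a ^ n := by rw [exp_log hapos]

lemma measure_Ico_le_of_moment_le {s C : ℝ} (hs : 0 ≤ s) (hC : 0 ≤ C)
    (μ : Measure ℝ) [IsFiniteMeasure μ]
    (hmom : ∀ n : ℕ, 1 ≤ n → (∫ t in Ico (0:ℝ) 1, t ^ n ∂μ) ≤ C * (n : ℝ) ^ (-s))
    {a : ℝ} (ha : 1 / 2 ≤ a) (ha' : a < 1) :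
    (μ (Ico a 1)).toReal ≤ exp 4 * C * (1 - a) ^ s := by
  have h1a : 0 < 1 - a := by linarith
  set n := ⌈(1 - a)⁻¹⌉₊
  have hn_ge : (1 - a)⁻¹ ≤ n := Nat.le_ceil _
  have hn_pos : 0 < (n : ℝ) := (inv_pos.2 h1a).trans_le hn_ge
  have hn_le : (n : ℝ) * (1 - a) ≤ 2 := by
    have := Nat.ceil_lt_add_one (inv_pos.2 h1a).le
    calc (n : ℝ) * (1 - a) ≤ ((1 - a)⁻¹ + 1) * (1 - a) := by gcongr
      _ = 1 + (1 - a) := by field_simp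
      _ ≤ 2 := by linarith
  have hdecay : (n : ℝ) ^ (-s) ≤ (1 - a) ^ s := by
    rw [rpow_neg hn_pos.le, ← inv_rpow hn_pos.le]
    exact rpow_le_rpow (by positivity) (inv_le_of_inv_le₀ h1a hn_ge) hs
  have hpow : exp (-4) ≤ a ^ n :=
    calc exp (-4) ≤ exp (-(2 * (n * (1 - a)))) := by gcongr; linarith
      _ ≤ a ^ n := exp_neg_two_mul_le_pow ha ha'.le n
  calc (μ (Ico a 1)).toReal = exp 4 * (exp (-4) * (μ (Ico a 1)).toReal) := by
        rw [← mul_assoc, ← exp_add]; norm_num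
    _ ≤ exp 4 * (a ^ n * (μ (Ico a 1)).toReal) := by gcongr
    _ ≤ exp 4 * (C * (n : ℝ) ^ (-s)) := by
        gcongr exp 4 * ?_
        exact (pow_mul_measure_Ico_le_integral_pow μ (by linarith : 0 ≤ a) n).trans
          (hmom n (Nat.cast_pos.1 hn_pos))
    _ ≤ exp 4 * C * (1 - a) ^ s := by rw [mul_assoc]; gcongr

/-- If the moments of `μ` satisfy `μ_n ≤ C n^{-s}`, then `μ` is an `s`-Carleson measure. -/
theorem moment_decay_implies_carleson (s : ℝ) (hs : 0 < s)
    (μ : Measure ℝ) [IsFiniteMeasure μ] (C : ℝ)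
    (hmom : ∀ n : ℕ, 1 ≤ n →
      (∫ t in Set.Ico (0:ℝ) 1, t ^ n ∂μ) ≤ C * (n : ℝ) ^ (-s)) :
    ∃ M : ℝ, 0 < M ∧ ∀ a : ℝ, 0 ≤ a → a < 1 →
      (μ (Set.Ico a 1)).toReal ≤ M * (1 - a) ^ s := by
  have hC : 0 ≤ C := by
    have h0 : 0 ≤ ∫ t in Ico (0:ℝ) 1, t ^ 1 ∂μ :=
      setIntegral_nonneg measurableSet_Ico fun t ht => pow_nonneg ht.1 1
    simpa using h0.trans (hmom 1 le_rfl)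
  exact isCarlesonMeasure_of_le_near_one μ hs.le (by norm_num : (1 / 2 : ℝ) < 1)
    fun a ha ha' => measure_Ico_le_of_moment_le hs.le hC μ hmom ha ha'
end

section
/- Let β > 0, γ ≥ 0, 0 ≤ q < s < ∞, and let μ be a finite positive Borel measure on [0,1) which is a γ-logarithmic s-Carleson measure, i.e. (log(e/(1-a)))^γ μ([a,1)) ≤ M (1-a)^s for all 0 ≤ a < 1. Then sup_{w ∈ 𝔻} ∫_0^1 (1-|w|)^β (log(e/(1-|w|)))^γ / ((1-t)^q (1-|w|t)^{s+β-q}) dμ(t) < ∞. -/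
/-! Cut `[0, 1)` into the dyadic layers `2⁻ⁿ⁻¹ < 1 - t ≤ 2⁻ⁿ`. On the `n`-th layer
`1 - |w| t ≥ max (2⁻ⁿ⁻¹) (1 - |w|)`, and the Carleson condition at `a = 1 - 2⁻ⁿ` bounds the
measure of the layer. With `ρ = (1 - |w|) 2ⁿ⁺¹`, the layer contributes `O(ρ ^ (β / 2))` when
`ρ ≤ 1` and `O(ρ ^ (q - s))` when `ρ > 1`: the logarithms are compared through
`1 - log (x y) ≤ (1 - log x) (1 - log y)` and `(1 - log x) ^ γ = O(x ^ (-β / 2))`. Summing over `n`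
gives two geometric series meeting at the layer where `ρ ≈ 1`, with a bound independent of `w`. -/

open MeasureTheory

open Finset in
theorem summable_and_tsum_le_of_two_sided_geometric {h : ℕ → ℝ} {x y K₁ K₂ : ℝ}
    (hx₀ : 0 ≤ x) (hx₁ : x < 1) (hy₀ : 0 ≤ y) (hy₁ : y < 1) (hK₁ : 0 ≤ K₁) (hh : ∀ n, 0 ≤ h n)
    (N : ℕ) (hlow : ∀ n < N, h n ≤ K₁ * x ^ (N - 1 - n)) (hhigh : ∀ n, h (n + N) ≤ K₂ * y ^ n) :
    Summable h ∧ ∑' n, h n ≤ K₁ * (1 - x)⁻¹ + K₂ * (1 - y)⁻¹ := by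
  have hgeom := (summable_geometric_of_lt_one hy₀ hy₁).mul_left K₂
  have hsum : Summable h :=
    (summable_nat_add_iff N).1 (hgeom.of_nonneg_of_le (fun n => hh _) hhigh)
  refine ⟨hsum, ?_⟩
  rw [← hsum.sum_add_tsum_nat_add N]
  gcongr
  · calc ∑ n ∈ range N, h n ≤ ∑ n ∈ range N, K₁ * x ^ (N - 1 - n) :=
          sum_le_sum fun n hn => hlow n (mem_range.1 hn)
      _ = K₁ * ∑ n ∈ Ico 0 N, x ^ n := by
          rw [← mul_sum, sum_range_reflect (x ^ ·), range_eq_Ico]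
      _ ≤ K₁ * (1 - x)⁻¹ := by
          gcongr
          simpa using geom_sum_Ico_le_of_lt_one (m := 0) (n := N) hx₀ hx₁
  · calc ∑' n, h (n + N) ≤ ∑' n, K₂ * y ^ n :=
          ((summable_nat_add_iff N).2 hsum).tsum_le_tsum hhigh hgeom
      _ = K₂ * (1 - y)⁻¹ := by rw [tsum_mul_left, tsum_geometric_of_lt_one hy₀ hy₁]

theorem summable_and_tsum_le_of_dyadic_bounds {h : ℕ → ℝ} {a c b K₁ K₂ : ℝ}
    (ha : 0 < a) (hc : 0 < c) (hb₀ : 0 < b) (hb₁ : b ≤ 1) (hK₁ : 0 ≤ K₁) (hK₂ : 0 ≤ K₂)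
    (hh : ∀ n, 0 ≤ h n)
    (hsmall : ∀ n : ℕ, b ≤ (1 / 2) ^ (n + 1) → h n ≤ K₁ * (b / (1 / 2) ^ (n + 1)) ^ a)
    (hlarge : ∀ n : ℕ, (1 / 2) ^ (n + 1) < b → h n ≤ K₂ * ((1 / 2) ^ (n + 1) / b) ^ c) :
    Summable h ∧ ∑' n, h n ≤ K₁ * (1 - (1 / 2) ^ a)⁻¹ + K₂ * (1 - (1 / 2) ^ c)⁻¹ := by
  have h2 : (0 : ℝ) ≤ 1 / 2 := by norm_num
  have hlt : ∀ {e : ℝ}, 0 < e → (1 / 2 : ℝ) ^ e < 1 := fun he =>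
    Real.rpow_lt_one h2 (by norm_num) he
  obtain ⟨N, hN₁, hN₂⟩ := exists_nat_pow_near_of_lt_one hb₀ hb₁ one_half_pos one_half_lt_one
  refine summable_and_tsum_le_of_two_sided_geometric (Real.rpow_nonneg h2 _) (hlt ha)
    (Real.rpow_nonneg h2 _) (hlt hc) hK₁ hh N (fun n hn => ?_) (fun n => ?_)
  · obtain ⟨k, rfl⟩ : ∃ k, N = n + 1 + k := ⟨N - (n + 1), by omega⟩
    have hratio : b / (1 / 2) ^ (n + 1) ≤ (1 / 2) ^ k := by
      rw [div_le_iff₀ (by positivity), ← pow_add, add_comm k]; exact hN₂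
    calc h n ≤ K₁ * (b / (1 / 2) ^ (n + 1)) ^ a :=
          hsmall n (hN₂.trans (pow_le_pow_of_le_one h2 (by norm_num) (by omega)))
      _ ≤ K₁ * ((1 / 2) ^ k) ^ a := by gcongr
      _ = K₁ * ((1 / 2) ^ a) ^ (n + 1 + k - 1 - n) := by
          rw [show n + 1 + k - 1 - n = k by omega, Real.rpow_pow_comm h2]
  · have hpow : (1 / 2 : ℝ) ^ (n + N + 1) ≤ (1 / 2) ^ (N + 1) :=
      pow_le_pow_of_le_one h2 (by norm_num) (by omega)
    have hratio : (1 / 2) ^ (n + N + 1) / b ≤ (1 / 2) ^ n := by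
      rw [div_le_iff₀ hb₀]
      calc (1 / 2 : ℝ) ^ (n + N + 1) = (1 / 2) ^ n * (1 / 2) ^ (N + 1) := by ring
        _ ≤ (1 / 2) ^ n * b := by gcongr
    calc h (n + N) ≤ K₂ * ((1 / 2) ^ (n + N + 1) / b) ^ c := hlarge _ (hpow.trans_lt hN₁)
      _ ≤ K₂ * ((1 / 2) ^ n) ^ c := by gcongr
      _ = K₂ * ((1 / 2) ^ c) ^ n := by rw [Real.rpow_pow_comm h2]

theorem log_exp_one_div {x : ℝ} (hx : x ≠ 0) : Real.log (Real.exp 1 / x) = 1 - Real.log x := by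
  rw [Real.log_div (Real.exp_ne_zero 1) hx, Real.log_exp]

theorem one_le_one_sub_log {x : ℝ} (hx₀ : 0 < x) (hx₁ : x ≤ 1) : 1 ≤ 1 - Real.log x := by
  linarith [Real.log_nonpos hx₀.le hx₁]

theorem one_sub_log_mul_le {x y : ℝ} (hx₀ : 0 < x) (hx₁ : x ≤ 1) (hy₀ : 0 < y) (hy₁ : y ≤ 1) :
    1 - Real.log (x * y) ≤ (1 - Real.log x) * (1 - Real.log y) := by
  rw [Real.log_mul hx₀.ne' hy₀.ne']
  nlinarith [Real.log_nonpos hx₀.le hx₁, Real.log_nonpos hy₀.le hy₁]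

theorem one_sub_log_rpow_le {x γ δ : ℝ} (hx₀ : 0 < x) (hx₁ : x ≤ 1) (hγ : 0 ≤ γ) (hδ : 0 < δ) :
    (1 - Real.log x) ^ γ ≤ (1 + γ / δ) ^ γ * x ^ (-δ) := by
  have hx : 0 ≤ x := hx₀.le
  rcases hγ.eq_or_lt with rfl | hγ
  · simpa using Real.one_le_rpow_of_pos_of_le_one_of_nonpos hx₀ hx₁ (neg_nonpos.2 hδ.le)
  have hε : 0 < δ / γ := by positivity
  -- `log (1 / x) ≤ (1 / x) ^ ε / ε` with `ε = δ / γ`: the `γ`-th power then gives `x ^ (-δ)`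
  have hlog : -Real.log x ≤ γ / δ * x ^ (-(δ / γ)) := by
    have := Real.log_le_rpow_div (inv_nonneg.2 hx) hε
    rwa [Real.log_inv, Real.inv_rpow hx, ← Real.rpow_neg hx, div_eq_inv_mul (x ^ _),
      inv_div] at this
  have hbase : 1 - Real.log x ≤ (1 + γ / δ) * x ^ (-(δ / γ)) := by
    linarith [Real.one_le_rpow_of_pos_of_le_one_of_nonpos hx₀ hx₁ (neg_nonpos.2 hε.le)]
  calc (1 - Real.log x) ^ γ ≤ ((1 + γ / δ) * x ^ (-(δ / γ))) ^ γ :=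
        Real.rpow_le_rpow (by linarith [one_le_one_sub_log hx₀ hx₁]) hbase hγ.le
    _ = (1 + γ / δ) ^ γ * x ^ (-δ) := by
        rw [Real.mul_rpow (by positivity) (by positivity), ← Real.rpow_mul hx, neg_mul,
          div_mul_cancel₀ δ hγ.ne']

section Layer

variable {β γ q s M b y m : ℝ}

theorem carleson_layer_le_of_le (hβ : 0 < β) (hγ : 0 ≤ γ) (hb₀ : 0 < b) (hby : b ≤ y)
    (hy : 2 * y ≤ 1) (hm : 0 ≤ m) (hCar : (1 - Real.log (2 * y)) ^ γ * m ≤ M * (2 * y) ^ s) :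
    b ^ β * (1 - Real.log b) ^ γ / (y ^ q * max y b ^ (s + β - q)) * m
      ≤ M * 2 ^ s * (2 ^ (β / 2) * (1 + γ / (β / 2)) ^ γ) * (b / y) ^ (β / 2) := by
  have hy₀ : 0 < y := hb₀.trans_le hby
  have hratio : b / (2 * y) ≤ 1 := (div_le_one₀ (by positivity)).2 (by linarith)
  have hL₀ : 0 ≤ 1 - Real.log (2 * y) := by linarith [one_le_one_sub_log (by positivity) hy]
  have hlog : (1 - Real.log b) ^ γ ≤ (1 - Real.log (2 * y)) ^ γ *
      ((1 + γ / (β / 2)) ^ γ * (b / (2 * y)) ^ (-(β / 2))) :=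
    calc (1 - Real.log b) ^ γ = (1 - Real.log (2 * y * (b / (2 * y)))) ^ γ := by
          rw [mul_div_cancel₀ _ (by positivity)]
      _ ≤ ((1 - Real.log (2 * y)) * (1 - Real.log (b / (2 * y)))) ^ γ :=
          Real.rpow_le_rpow (zero_le_one.trans (one_le_one_sub_log (by positivity)
            (mul_le_one₀ hy (by positivity) hratio)))
            (one_sub_log_mul_le (by positivity) hy (by positivity) hratio) hγ
      _ = (1 - Real.log (2 * y)) ^ γ * (1 - Real.log (b / (2 * y))) ^ γ :=
          Real.mul_rpow hL₀ (by linarith [one_le_one_sub_log (by positivity) hratio])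
      _ ≤ _ := by
          gcongr
          exact one_sub_log_rpow_le (by positivity) hratio hγ (by positivity)
  calc b ^ β * (1 - Real.log b) ^ γ / (y ^ q * max y b ^ (s + β - q)) * m
      = b ^ β * ((1 - Real.log b) ^ γ * m) / (y ^ s * y ^ β) := by
        rw [max_eq_left hby, ← Real.rpow_add hy₀, ← Real.rpow_add hy₀]; ring_nf
    _ ≤ b ^ β * ((1 + γ / (β / 2)) ^ γ * (b / (2 * y)) ^ (-(β / 2)) * (M * (2 * y) ^ s)) /
          (y ^ s * y ^ β) := by
        gcongr b ^ β * ?_ / _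
        calc (1 - Real.log b) ^ γ * m
            ≤ (1 - Real.log (2 * y)) ^ γ *
                ((1 + γ / (β / 2)) ^ γ * (b / (2 * y)) ^ (-(β / 2))) * m := by gcongr
          _ = (1 + γ / (β / 2)) ^ γ * (b / (2 * y)) ^ (-(β / 2)) *
                ((1 - Real.log (2 * y)) ^ γ * m) := by ring
          _ ≤ _ := by gcongr
    _ = M * 2 ^ s * (2 ^ (β / 2) * (1 + γ / (β / 2)) ^ γ) * (b / y) ^ (β / 2) := by
        obtain ⟨ρ, hρ, rfl⟩ : ∃ ρ, 0 < ρ ∧ b = ρ * y := ⟨b / y, by positivity, by field_simp⟩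
        have hρβ : ρ ^ β = ρ ^ (β / 2) * ρ ^ (β / 2) := by rw [← Real.rpow_add hρ, add_halves]
        rw [mul_div_mul_right _ _ hy₀.ne', mul_div_assoc, mul_div_cancel_right₀ _ hy₀.ne',
          Real.mul_rpow hρ.le hy₀.le, Real.mul_rpow zero_le_two hy₀.le,
          Real.rpow_neg (by positivity), Real.div_rpow hρ.le zero_le_two, inv_div, hρβ]
        field_simp

theorem carleson_layer_le_of_lt (hγ : 0 ≤ γ) (hy₀ : 0 < y) (hyb : y < b) (hb₁ : b ≤ 1)
    (hy : 2 * y ≤ 1) (hm : 0 ≤ m) (hCar : (1 - Real.log (2 * y)) ^ γ * m ≤ M * (2 * y) ^ s) :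
    b ^ β * (1 - Real.log b) ^ γ / (y ^ q * max y b ^ (s + β - q)) * m
      ≤ M * 2 ^ s * 2 ^ γ * (y / b) ^ (s - q) := by
  have hb₀ : 0 < b := hy₀.trans hyb
  have hL : 1 ≤ 1 - Real.log (2 * y) := one_le_one_sub_log (by positivity) hy
  have hlog : 1 - Real.log b ≤ 2 * (1 - Real.log (2 * y)) := by
    have : Real.log y < Real.log b := Real.log_lt_log hy₀ hyb
    rw [Real.log_mul two_ne_zero hy₀.ne'] at hL ⊢
    linarith [Real.log_two_lt_d9]
  have hlog₀ : 0 ≤ 1 - Real.log b := by linarith [one_le_one_sub_log hb₀ hb₁]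
  calc b ^ β * (1 - Real.log b) ^ γ / (y ^ q * max y b ^ (s + β - q)) * m
      = b ^ β * ((1 - Real.log b) ^ γ * m) / (y ^ q * b ^ (s + β - q)) := by
        rw [max_eq_right hyb.le]; ring
    _ ≤ b ^ β * (2 ^ γ * (M * (2 * y) ^ s)) / (y ^ q * b ^ (s + β - q)) := by
        gcongr b ^ β * ?_ / _
        calc (1 - Real.log b) ^ γ * m ≤ (2 * (1 - Real.log (2 * y))) ^ γ * m := by gcongr
          _ = 2 ^ γ * ((1 - Real.log (2 * y)) ^ γ * m) := by
              rw [Real.mul_rpow zero_le_two (by linarith)]; ring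
          _ ≤ 2 ^ γ * (M * (2 * y) ^ s) := by gcongr
    _ = M * 2 ^ s * 2 ^ γ * (y / b) ^ (s - q) := by
        rw [Real.mul_rpow zero_le_two hy₀.le, Real.div_rpow hy₀.le hb₀.le,
          show s + β - q = (s - q) + β by ring, Real.rpow_add hb₀,
          show s = (s - q) + q by ring, Real.rpow_add hy₀, show s - q + q - q = s - q by ring]
        field_simp

end Layer

theorem div_rpow_mul_rpow_le_of_le_one_sub {c q p r t y : ℝ} (hc : 0 ≤ c) (hq : 0 ≤ q)
    (hp : 0 ≤ p) (hr₀ : 0 ≤ r) (hr₁ : r ≤ 1) (ht : 0 ≤ t) (hy₀ : 0 < y) (hyt : y ≤ 1 - t) :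
    c / ((1 - t) ^ q * (1 - r * t) ^ p) ≤ c / (y ^ q * max y (1 - r) ^ p) := by
  have hmax : max y (1 - r) ≤ 1 - r * t := max_le (by nlinarith) (by nlinarith)
  have hmax₀ : 0 < max y (1 - r) := lt_max_of_lt_left hy₀
  gcongr
  exact Real.rpow_nonneg (hy₀.le.trans hyt) q

theorem setIntegral_Ico_le_tsum_of_dyadic {μ : Measure ℝ} [IsFiniteMeasure μ] {f : ℝ → ℝ}
    (hf₀ : ∀ t ∈ Set.Ico (0 : ℝ) 1, 0 ≤ f t) {g : ℕ → ℝ} (hg₀ : ∀ n, 0 ≤ g n)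
    (hfg : ∀ n : ℕ, ∀ t ∈ Set.Ico (0 : ℝ) 1, (1 / 2) ^ (n + 1) ≤ 1 - t → f t ≤ g n)
    (hsum : Summable fun n => g n * (μ (Set.Ico (1 - (1 / 2) ^ n) 1)).toReal) :
    ∫ t in Set.Ico (0 : ℝ) 1, f t ∂μ ≤ ∑' n, g n * (μ (Set.Ico (1 - (1 / 2) ^ n) 1)).toReal := by
  set I : ℕ → Set ℝ := fun n => Set.Ico (1 - (1 / 2) ^ n) (1 - (1 / 2) ^ (n + 1))
  have hcover : Set.Ico (0 : ℝ) 1 ⊆ ⋃ n, I n := by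
    intro t ⟨ht₀, ht₁⟩
    obtain ⟨n, hn₁, hn₂⟩ := exists_nat_pow_near_of_lt_one (sub_pos.2 ht₁) (by linarith)
      one_half_pos one_half_lt_one
    exact Set.mem_iUnion.2 ⟨n, by linarith, by linarith⟩
  have hI : ∀ n, ∀ t ∈ I n, t ∈ Set.Ico (0 : ℝ) 1 ∧ (1 / 2) ^ (n + 1) ≤ 1 - t := by
    intro n t ⟨ht₁, ht₂⟩
    have : (1 / 2 : ℝ) ^ n ≤ 1 := pow_le_one₀ (by norm_num) (by norm_num)
    have : (0 : ℝ) < (1 / 2) ^ (n + 1) := by positivity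
    exact ⟨⟨by linarith, by linarith⟩, by linarith⟩
  have hpiece : ∀ n, ∫⁻ t in I n, ENNReal.ofReal ‖f t‖ ∂μ
      ≤ ENNReal.ofReal (g n * (μ (Set.Ico (1 - (1 / 2) ^ n) 1)).toReal) := by
    intro n
    calc ∫⁻ t in I n, ENNReal.ofReal ‖f t‖ ∂μ ≤ ∫⁻ _ in I n, ENNReal.ofReal (g n) ∂μ := by
          refine setLIntegral_mono measurable_const fun t ht => ENNReal.ofReal_le_ofReal ?_
          obtain ⟨ht, hnt⟩ := hI n t ht
          rw [Real.norm_of_nonneg (hf₀ t ht)]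
          exact hfg n t ht hnt
      _ = ENNReal.ofReal (g n) * μ (I n) := setLIntegral_const _ _
      _ ≤ ENNReal.ofReal (g n) * μ (Set.Ico (1 - (1 / 2) ^ n) 1) := by
          gcongr
          exact Set.Ico_subset_Ico_right (sub_le_self 1 (by positivity))
      _ = _ := by rw [ENNReal.ofReal_mul (hg₀ n), ENNReal.ofReal_toReal (measure_ne_top _ _)]
  have hterm₀ : ∀ n, 0 ≤ g n * (μ (Set.Ico (1 - (1 / 2) ^ n) 1)).toReal :=
    fun n => mul_nonneg (hg₀ n) ENNReal.toReal_nonneg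
  calc ∫ t in Set.Ico (0 : ℝ) 1, f t ∂μ ≤ ‖∫ t in Set.Ico (0 : ℝ) 1, f t ∂μ‖ :=
        Real.le_norm_self _
    _ ≤ (∫⁻ t in Set.Ico (0 : ℝ) 1, ENNReal.ofReal ‖f t‖ ∂μ).toReal :=
        norm_integral_le_lintegral_norm _
    _ ≤ _ := by
        refine ENNReal.toReal_le_of_le_ofReal (tsum_nonneg hterm₀) ?_
        calc ∫⁻ t in Set.Ico (0 : ℝ) 1, ENNReal.ofReal ‖f t‖ ∂μ
            ≤ ∫⁻ t in ⋃ n, I n, ENNReal.ofReal ‖f t‖ ∂μ := lintegral_mono_set hcover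
          _ ≤ ∑' n, ∫⁻ t in I n, ENNReal.ofReal ‖f t‖ ∂μ := lintegral_iUnion_le _ _
          _ ≤ ∑' n, ENNReal.ofReal (g n * (μ (Set.Ico (1 - (1 / 2) ^ n) 1)).toReal) :=
              ENNReal.tsum_le_tsum hpiece
          _ = _ := (ENNReal.ofReal_tsum_of_nonneg hterm₀ hsum).symm

/-- If `μ` is a `γ`-logarithmic `s`-Carleson measure on `[0,1)`, then the integral
`∫_0^1 (1-|w|)^β (log(e/(1-|w|)))^γ / ((1-t)^q (1-|w|t)^{s+β-q}) dμ(t)` is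
uniformly bounded over `w` in the unit disc. -/
theorem logCarleson_implies_integral_bound (β γ q s : ℝ)
    (hβ : 0 < β) (hγ : 0 ≤ γ) (hq : 0 ≤ q) (hqs : q < s)
    (μ : Measure ℝ) [IsFiniteMeasure μ]
    (hCar : ∃ M : ℝ, 0 < M ∧ ∀ a : ℝ, 0 ≤ a → a < 1 →
      (Real.log (Real.exp 1 / (1 - a))) ^ γ * (μ (Set.Ico a 1)).toReal ≤ M * (1 - a) ^ s) :
    ∃ C : ℝ, ∀ w : ℂ, ‖w‖ < 1 →
      (∫ t in Set.Ico (0:ℝ) 1,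
        (1 - ‖w‖) ^ β * (Real.log (Real.exp 1 / (1 - ‖w‖))) ^ γ /
          ((1 - t) ^ q * (1 - ‖w‖ * t) ^ (s + β - q)) ∂μ) ≤ C := by
  obtain ⟨M, hM, hCar⟩ := hCar
  refine ⟨M * 2 ^ s * (2 ^ (β / 2) * (1 + γ / (β / 2)) ^ γ) * (1 - (1 / 2) ^ (β / 2))⁻¹ +
    M * 2 ^ s * 2 ^ γ * (1 - (1 / 2) ^ (s - q))⁻¹, fun w hw => ?_⟩
  set b := 1 - ‖w‖
  have hb₀ : 0 < b := sub_pos.2 hw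
  have hb₁ : b ≤ 1 := sub_le_self _ (norm_nonneg w)
  have hy : ∀ n : ℕ, 2 * (1 / 2 : ℝ) ^ (n + 1) ≤ 1 := fun n => by
    rw [pow_succ]; linarith [pow_le_one₀ (by norm_num : (0 : ℝ) ≤ 1 / 2) (by norm_num) (n := n)]
  have hCar_dyadic : ∀ n : ℕ, (1 - Real.log (2 * (1 / 2) ^ (n + 1))) ^ γ *
      (μ (Set.Ico (1 - (1 / 2) ^ n) 1)).toReal ≤ M * (2 * (1 / 2) ^ (n + 1)) ^ s := fun n => by
    have h := hCar (1 - (1 / 2) ^ n) (by linarith [hy n, pow_succ (1 / 2 : ℝ) n])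
      (sub_lt_self _ (by positivity))
    rw [show 2 * (1 / 2 : ℝ) ^ (n + 1) = (1 / 2) ^ n by ring]
    rwa [sub_sub_cancel, log_exp_one_div (by positivity)] at h
  have hnum : 0 ≤ b ^ β * (1 - Real.log b) ^ γ :=
    mul_nonneg (by positivity) (Real.rpow_nonneg (by linarith [one_le_one_sub_log hb₀ hb₁]) γ)
  have hdyadic := summable_and_tsum_le_of_dyadic_bounds (by positivity : 0 < β / 2)
    (sub_pos.2 hqs) hb₀ hb₁ (by positivity) (by positivity)
    (fun n => mul_nonneg (div_nonneg hnum (by positivity)) ENNReal.toReal_nonneg)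
    (fun n hn => carleson_layer_le_of_le hβ hγ hb₀ hn (hy n) ENNReal.toReal_nonneg (hCar_dyadic n))
    (fun n hn => carleson_layer_le_of_lt hγ (by positivity) hn hb₁ (hy n) ENNReal.toReal_nonneg
      (hCar_dyadic n))
  rw [log_exp_one_div hb₀.ne']
  refine (setIntegral_Ico_le_tsum_of_dyadic (fun t ht => ?_) ?_ (fun n t ht hnt =>
    div_rpow_mul_rpow_le_of_le_one_sub hnum hq (by linarith) (norm_nonneg w) hw.le ht.1
      (by positivity) hnt) hdyadic.1).trans hdyadic.2
  · exact div_nonneg hnum (mul_nonneg (Real.rpow_nonneg (by linarith [ht.2]) q)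
      (Real.rpow_nonneg (by nlinarith [ht.1, ht.2, norm_nonneg w]) _))
  · exact fun n => div_nonneg hnum (by positivity)
end

section
/- Let μ be a finite positive Borel measure on [0,1) that is a 1-logarithmic 1-Carleson measure, i.e. log(e/(1-a)) μ([a,1)) ≲ (1-a). Then sup_{0≤r<1} ∫_0^1 (1-r) log(e/(1-t)) / (1-tr)^2 dμ(t) < ∞. -/
/-!
Split `[0, 1)` into the dyadic layers `2⁻⁽ⁿ⁺¹⁾ < 1 - t ≤ 2⁻ⁿ` and put `ρ = 1 - r`. On the `n`-th
layer `log (e / (1 - t))` is at most twice `log (e 2ⁿ)` and `1 - t r ≥ max (1 - t) ρ`, while the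
Carleson condition at `a = 1 - 2⁻ⁿ` bounds the mass of the layer by `M 2⁻ⁿ / log (e 2ⁿ)`. The
logarithms cancel, and the layer contributes at most `8 M min (ρ 2ⁿ) (2⁻ⁿ / ρ)`. These terms grow
geometrically up to the layer where `2⁻ⁿ ≈ ρ` and decay geometrically after it, so their sum is
bounded independently of `ρ`.
-/

open MeasureTheory Set Real

lemma one_le_log_exp_one_div {x : ℝ} (hx0 : 0 < x) (hx1 : x ≤ 1) : 1 ≤ log (exp 1 / x) := by
  rw [log_div (exp_ne_zero 1) hx0.ne', log_exp]
  linarith [log_nonpos hx0.le hx1]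

lemma log_exp_one_div_le_two_mul {s x : ℝ} (hx0 : 0 < x) (hx : x ≤ 1) (hs : x / 2 < s) :
    log (exp 1 / s) ≤ 2 * log (exp 1 / x) := by
  have hlog : log (exp 1 / (x / 2)) = log (exp 1 / x) + log 2 := by
    rw [div_div_eq_mul_div, log_div (by positivity) hx0.ne', log_mul (exp_ne_zero 1) two_ne_zero,
      log_div (exp_ne_zero 1) hx0.ne']
    ring
  calc log (exp 1 / s) ≤ log (exp 1 / (x / 2)) :=
        log_le_log (div_pos (exp_pos 1) ((half_pos hx0).trans hs))
          (div_le_div_of_nonneg_left (exp_pos 1).le (half_pos hx0) hs.le)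
    _ ≤ log (exp 1 / x) + 1 := by rw [hlog]; linarith [log_two_lt_d9]
    _ ≤ 2 * log (exp 1 / x) := by linarith [one_le_log_exp_one_div hx0 hx]

lemma max_one_sub_le_one_sub_mul {r t : ℝ} (hr0 : 0 ≤ r) (hr1 : r ≤ 1) (ht0 : 0 ≤ t)
    (ht1 : t ≤ 1) :
    max (1 - t) (1 - r) ≤ 1 - t * r :=
  max_le (by nlinarith) (by nlinarith)

lemma mul_div_max_sq_le_min {x y : ℝ} (hx : 0 < x) (hy : 0 < y) :
    x * y / max x y ^ 2 ≤ min (y / x) (x / y) := by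
  have hm : 0 < max x y := lt_max_of_lt_left hx
  refine le_min ?_ ?_ <;> rw [div_le_div_iff₀ (by positivity) (by positivity)]
  · nlinarith [mul_le_mul_of_nonneg_left (pow_le_pow_left₀ hx.le (le_max_left x y) 2) hy.le]
  · nlinarith [mul_le_mul_of_nonneg_left (pow_le_pow_left₀ hy.le (le_max_right x y) 2) hx.le]

def dyadicLayer (n : ℕ) : Set ℝ := (fun t => 1 - t) ⁻¹' Ioc ((1 / 2) ^ (n + 1)) ((1 / 2) ^ n)

lemma Ico_subset_iUnion_dyadicLayer : Ico (0 : ℝ) 1 ⊆ ⋃ n, dyadicLayer n := by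
  rintro t ⟨ht0, ht1⟩
  obtain ⟨n, hn⟩ := exists_nat_pow_near_of_lt_one (sub_pos.2 ht1) (by linarith) one_half_pos
    one_half_lt_one
  exact mem_iUnion.2 ⟨n, hn⟩

lemma dyadicLayer_subset_Ico (n : ℕ) : dyadicLayer n ⊆ Ico (1 - (1 / 2) ^ n) 1 := by
  rintro t ⟨ht, ht'⟩
  constructor <;> linarith [pow_pos (one_half_pos (α := ℝ)) (n + 1)]

noncomputable def logKernel (r t : ℝ) : ℝ :=
  (1 - r) * log (exp 1 / (1 - t)) / (1 - t * r) ^ (2 : ℝ)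

lemma logKernel_nonneg {r t : ℝ} (hr1 : r ≤ 1) (ht : t ∈ Ico (0 : ℝ) 1) :
    0 ≤ logKernel r t :=
  div_nonneg (mul_nonneg (sub_nonneg.2 hr1)
    (zero_le_one.trans (one_le_log_exp_one_div (by linarith [ht.2]) (by linarith [ht.1]))))
    (by rw [rpow_two]; positivity)

lemma measurable_logKernel (r : ℝ) : Measurable (logKernel r) := by
  unfold logKernel
  fun_prop

lemma logKernel_le_of_mem_dyadicLayer {r t : ℝ} {n : ℕ} (hr0 : 0 ≤ r) (hr1 : r ≤ 1)
    (ht : t ∈ dyadicLayer n) :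
    logKernel r t ≤ 8 * ((1 - r) / max ((1 / 2) ^ n) (1 - r) ^ 2) * log (exp 1 / (1 / 2) ^ n) := by
  obtain ⟨hlow, hup⟩ := ht
  set x : ℝ := (1 / 2) ^ n
  have hx : (1 / 2 : ℝ) ^ (n + 1) = x / 2 := by rw [pow_succ]; ring
  simp only [hx] at hlow
  have hx1 : x ≤ 1 := pow_le_one₀ one_half_pos.le one_half_lt_one.le
  have hx0 : 0 < x := by positivity
  have hden : max x (1 - r) / 2 ≤ 1 - t * r := by
    refine le_trans ?_ (max_one_sub_le_one_sub_mul hr0 hr1 (by linarith) (by linarith))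
    rw [div_le_iff₀ two_pos]
    exact max_le (by linarith [le_max_left (1 - t) (1 - r)])
      (by linarith [le_max_right (1 - t) (1 - r)])
  have hρ : 0 ≤ 1 - r := sub_nonneg.2 hr1
  have hlog := log_exp_one_div_le_two_mul hx0 hx1 hlow
  have hnum : 0 ≤ (1 - r) * (2 * log (exp 1 / x)) :=
    mul_nonneg hρ (by linarith [one_le_log_exp_one_div hx0 hx1])
  unfold logKernel
  rw [rpow_two]
  calc (1 - r) * log (exp 1 / (1 - t)) / (1 - t * r) ^ 2
      ≤ (1 - r) * (2 * log (exp 1 / x)) / (max x (1 - r) / 2) ^ 2 := by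
        gcongr
    _ = 8 * ((1 - r) / max x (1 - r) ^ 2) * log (exp 1 / x) := by
        field_simp
        ring

theorem tsum_le_of_le_min_geometric {q ρ : ℝ} {f : ℕ → ℝ} (hq0 : 0 < q) (hq1 : q < 1)
    (hρ0 : 0 < ρ) (hρ1 : ρ ≤ 1) (hf0 : ∀ n, 0 ≤ f n)
    (hf : ∀ n, f n ≤ min (ρ / q ^ n) (q ^ n / ρ)) :
    Summable f ∧ ∑' n, f n ≤ 2 / (1 - q) := by
  have hgeom := summable_geometric_of_lt_one hq0.le hq1
  have hs : Summable f := .of_nonneg_of_le hf0 (fun n => (hf n).trans (min_le_right _ _))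
    (by simpa only [div_eq_mul_inv] using hgeom.mul_right ρ⁻¹)
  refine ⟨hs, ?_⟩
  obtain ⟨N, hρN, hNρ⟩ := exists_nat_pow_near_of_lt_one hρ0 hρ1 hq0 hq1
  have head : ∑ i ∈ Finset.range (N + 1), f i ≤ 1 / (1 - q) := calc
    ∑ i ∈ Finset.range (N + 1), f i = ∑ j ∈ Finset.range (N + 1), f (N - j) := by
      rw [← Finset.sum_range_reflect, Nat.add_sub_cancel]
    _ ≤ ∑ j ∈ Finset.range (N + 1), q ^ j := by
      refine Finset.sum_le_sum fun j hj => (hf _).trans <| (min_le_left _ _).trans ?_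
      have hjN : j ≤ N := Nat.lt_succ_iff.mp (Finset.mem_range.mp hj)
      rw [div_le_iff₀ (pow_pos hq0 _), ← pow_add, Nat.add_sub_cancel' hjN]
      exact hNρ
    _ ≤ 1 / (1 - q) := by
      simpa [one_div] using geom_sum_Ico_le_of_lt_one (m := 0) hq0.le hq1
  have tail : ∑' i, f (i + (N + 1)) ≤ 1 / (1 - q) := calc
    ∑' i, f (i + (N + 1)) ≤ ∑' i, q ^ (N + 1) / ρ * q ^ i :=
      hs.comp_injective (add_left_injective _) |>.tsum_le_tsum
        (fun i => (hf _).trans <| (min_le_right _ _).trans_eq (by ring)) (hgeom.mul_left _)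
    _ ≤ 1 / (1 - q) := by
      rw [tsum_mul_left, tsum_geometric_of_lt_one hq0.le hq1, ← div_eq_mul_inv]
      gcongr
      rw [div_le_one hρ0]
      exact hρN.le
  rw [← hs.sum_add_tsum_nat_add (N + 1), show 2 / (1 - q) = 1 / (1 - q) + 1 / (1 - q) by ring]
  exact add_le_add head tail

section Carleson

variable {μ : Measure ℝ} [IsFiniteMeasure μ] {M : ℝ}

lemma lintegral_dyadicLayer_logKernel_le (hM0 : 0 ≤ M)
    (hM : ∀ a : ℝ, 0 ≤ a → a < 1 → log (exp 1 / (1 - a)) * (μ (Ico a 1)).toReal ≤ M * (1 - a))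
    {r : ℝ} (hr0 : 0 ≤ r) (hr1 : r < 1) (n : ℕ) :
    ∫⁻ t in dyadicLayer n, ENNReal.ofReal (logKernel r t) ∂μ ≤
      ENNReal.ofReal (8 * M * min ((1 - r) / (1 / 2) ^ n) ((1 / 2) ^ n / (1 - r))) := by
  set x : ℝ := (1 / 2) ^ n
  set c : ℝ := 8 * ((1 - r) / max x (1 - r) ^ 2) with hc_def
  have hx0 : 0 < x := by positivity
  have hx1 : x ≤ 1 := pow_le_one₀ one_half_pos.le one_half_lt_one.le
  have hc : 0 ≤ c := by have := sub_pos.2 hr1; positivity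
  have htail := hM (1 - x) (by linarith) (by linarith)
  rw [sub_sub_cancel] at htail
  calc ∫⁻ t in dyadicLayer n, ENNReal.ofReal (logKernel r t) ∂μ
      ≤ ∫⁻ _ in dyadicLayer n, ENNReal.ofReal (c * log (exp 1 / x)) ∂μ :=
        setLIntegral_mono measurable_const fun t ht =>
          ENNReal.ofReal_le_ofReal (logKernel_le_of_mem_dyadicLayer hr0 hr1.le ht)
    _ = ENNReal.ofReal (c * log (exp 1 / x)) * μ (dyadicLayer n) := setLIntegral_const _ _
    _ ≤ ENNReal.ofReal (c * log (exp 1 / x)) * μ (Ico (1 - x) 1) := by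
        gcongr
        exact dyadicLayer_subset_Ico n
    _ = ENNReal.ofReal (c * (log (exp 1 / x) * (μ (Ico (1 - x) 1)).toReal)) := by
        rw [← mul_assoc, ENNReal.ofReal_mul' ENNReal.toReal_nonneg,
          ENNReal.ofReal_toReal (measure_ne_top μ _)]
    _ ≤ ENNReal.ofReal (c * (M * x)) := ENNReal.ofReal_le_ofReal (by gcongr)
    _ ≤ ENNReal.ofReal (8 * M * min ((1 - r) / x) (x / (1 - r))) := by
        refine ENNReal.ofReal_le_ofReal ?_
        calc c * (M * x) = 8 * M * (x * (1 - r) / max x (1 - r) ^ 2) := by rw [hc_def]; ring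
          _ ≤ 8 * M * min ((1 - r) / x) (x / (1 - r)) :=
            mul_le_mul_of_nonneg_left (mul_div_max_sq_le_min hx0 (sub_pos.2 hr1))
              (mul_nonneg (by norm_num) hM0)

lemma lintegral_logKernel_le (hM0 : 0 ≤ M)
    (hM : ∀ a : ℝ, 0 ≤ a → a < 1 → log (exp 1 / (1 - a)) * (μ (Ico a 1)).toReal ≤ M * (1 - a))
    {r : ℝ} (hr0 : 0 ≤ r) (hr1 : r < 1) :
    ∫⁻ t in Ico (0 : ℝ) 1, ENNReal.ofReal (logKernel r t) ∂μ ≤ ENNReal.ofReal (32 * M) := by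
  set f : ℕ → ℝ := fun n => min ((1 - r) / (1 / 2) ^ n) ((1 / 2) ^ n / (1 - r))
  have hρ : 0 < 1 - r := sub_pos.2 hr1
  have hf0 : ∀ n, 0 ≤ f n := fun n => by positivity
  obtain ⟨hsum, hle⟩ := tsum_le_of_le_min_geometric one_half_pos one_half_lt_one hρ
    (by linarith) hf0 fun n => le_rfl
  calc ∫⁻ t in Ico (0 : ℝ) 1, ENNReal.ofReal (logKernel r t) ∂μ
      ≤ ∫⁻ t in ⋃ n, dyadicLayer n, ENNReal.ofReal (logKernel r t) ∂μ :=
        lintegral_mono_set Ico_subset_iUnion_dyadicLayer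
    _ ≤ ∑' n, ∫⁻ t in dyadicLayer n, ENNReal.ofReal (logKernel r t) ∂μ := lintegral_iUnion_le _ _
    _ ≤ ∑' n, ENNReal.ofReal (8 * M * f n) :=
        ENNReal.tsum_le_tsum (lintegral_dyadicLayer_logKernel_le hM0 hM hr0 hr1)
    _ = ENNReal.ofReal (∑' n, 8 * M * f n) :=
        (ENNReal.ofReal_tsum_of_nonneg (fun n => by have := hf0 n; positivity)
          (hsum.mul_left _)).symm
    _ ≤ ENNReal.ofReal (32 * M) := by
        refine ENNReal.ofReal_le_ofReal ?_
        rw [tsum_mul_left]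
        norm_num at hle
        nlinarith

end Carleson

/-- If `μ` is a 1-logarithmic 1-Carleson measure on `[0,1)`, then
`sup_{0≤r<1} ∫_0^1 (1-r) log(e/(1-t))/(1-tr)^2 dμ(t) < ∞`. -/
theorem logCarleson_integral_bound (μ : Measure ℝ) [IsFiniteMeasure μ]
    (hCar : ∃ M : ℝ, 0 < M ∧ ∀ a : ℝ, 0 ≤ a → a < 1 →
      Real.log (Real.exp 1 / (1 - a)) * (μ (Set.Ico a 1)).toReal ≤ M * (1 - a)) :
    ∃ C : ℝ, ∀ r : ℝ, 0 ≤ r → r < 1 →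
      (∫ t in Set.Ico (0:ℝ) 1,
        (1 - r) * Real.log (Real.exp 1 / (1 - t)) / (1 - t * r) ^ (2:ℝ) ∂μ) ≤ C := by
  obtain ⟨M, hM0, hM⟩ := hCar
  refine ⟨32 * M, fun r hr0 hr1 => ?_⟩
  have hnonneg : 0 ≤ᵐ[μ.restrict (Ico 0 1)] logKernel r :=
    (ae_restrict_iff' measurableSet_Ico).2 (.of_forall fun t ht => logKernel_nonneg hr1.le ht)
  change ∫ t in Ico 0 1, logKernel r t ∂μ ≤ 32 * M
  rw [integral_eq_lintegral_of_nonneg_ae hnonneg (measurable_logKernel r).aestronglyMeasurable]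
  exact ENNReal.toReal_le_of_le_ofReal (by positivity) (lintegral_logKernel_le hM0.le hM hr0 hr1)
end
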